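/- Słupecki's Theorem. Let A be a finite set with |A| > 2, and let F be a set of operations on A that contains every unary operation on A. Then F is complete if and only if F contains an operation that is both surjective and essential, i.e. depends on at least two of its variables. -/

import Mathlib

universe u

/-- The type of finitary operations (of positive arity `n + 1`) on `A`. -/
abbrev Ops (A : Type u) : Type u := Σ n : ℕ, (Fin (n + 1) → A) → A

/-- A set of finitary operations on `A` is a clone if it contains all projection
operations and is closed under composition. -/
def IsClone {A : Type u} (C : Set (Ops A)) : Prop :=
  (∀ (n : ℕ) (i : Fin (n + 1)), (⟨n, fun x => x i⟩ : Ops A) ∈ C) ∧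
  ∀ (n m : ℕ) (f : (Fin (n + 1) → A) → A) (g : Fin (n + 1) → (Fin (m + 1) → A) → A),
    (⟨n, f⟩ : Ops A) ∈ C → (∀ i, (⟨m, g i⟩ : Ops A) ∈ C) →
    (⟨m, fun x => f fun i => g i x⟩ : Ops A) ∈ C

/-- The clone generated by a set `F` of operations: the least clone containing `F`. -/
def cloneGen {A : Type u} (F : Set (Ops A)) : Set (Ops A) :=
  ⋂₀ {C : Set (Ops A) | IsClone C ∧ F ⊆ C}

/-- The clone of all projection operations on `A`. -/
def projClone (A : Type u) : Set (Ops A) :=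
  {f : Ops A | ∃ i : Fin (f.1 + 1), f.2 = fun x => x i}

/-- A clone `M` is maximal if it is a proper subclone of the clone of all operations
and the clone of all operations is the only clone properly containing it. -/
def IsMaximalClone {A : Type u} (M : Set (Ops A)) : Prop :=
  IsClone M ∧ M ≠ Set.univ ∧
    ∀ D : Set (Ops A), IsClone D → M ⊆ D → D = M ∨ D = Set.univ

/-- A clone `C` is minimal if the clone of projections is its unique proper subclone. -/
def IsMinimalClone {A : Type u} (C : Set (Ops A)) : Prop :=
  IsClone C ∧ C ≠ projClone A ∧
    ∀ D : Set (Ops A), IsClone D → D ⊆ C → D = projClone A ∨ D = C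

/-- An `n`-ary operation `f` preserves a `k`-ary relation `ρ` if applying `f`
coordinatewise to tuples from `ρ` always yields a tuple in `ρ`. -/
def Preserves {A : Type u} {n k : ℕ} (f : (Fin n → A) → A) (ρ : Set (Fin k → A)) : Prop :=
  ∀ t : Fin n → Fin k → A, (∀ i, t i ∈ ρ) → (fun j => f fun i => t i j) ∈ ρ

/-- `Pol ρ` is the clone of all operations preserving the relation `ρ`. -/
def Pol {A : Type u} {k : ℕ} (ρ : Set (Fin k → A)) : Set (Ops A) :=
  {f : Ops A | Preserves f.2 ρ}

/-- An `n`-ary operation `f` depends on its `i`-th variable if there are two tuples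
differing only in the `i`-th coordinate on which `f` takes different values. -/
def DependsOnVar {A : Type u} {n : ℕ} (f : (Fin n → A) → A) (i : Fin n) : Prop :=
  ∃ x y : Fin n → A, (∀ j, j ≠ i → x j = y j) ∧ f x ≠ f y

/-!
Operations that are not both surjective and essential form a clone: if `f(g₀, …, gₙ)` is
surjective then so is `f`, which is then essentially unary, `f x = u (x i)`, and the composite
is `u ∘ gᵢ`. Hence a complete `F` must contain a surjective essential operation.

Conversely, let a clone `D` contain all unary operations and a surjective `f` depending on its
`i`-th and `j`-th variables, and view `f` as the binary map `g s t = f (update t i s)`. Since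
`|A| ≥ 3`, some rectangle `{s₁, s₂} × {t₁, t₂}` carries three values of `g` (Jablonskij's
lemma), so it has a corner whose value occurs only once. Feeding `g` with unary images of two
`{a₀, a₁}`-valued operations and testing for that value yields their conjunction; with
negation, `D` contains every `{a₀, a₁}`-valued operation, hence every two-valued one. Enlarging
the rectangle one row and one column at a time, `k` values of `g` are found on fewer than `k`
rows and columns, so an operation with `k` values factors through `g` applied to operations
with fewer values, and induction on the number of values gives everything.
-/

open Finset Function

section Clone

variable {A : Type u}

theorem subset_cloneGen (F : Set (Ops A)) : F ⊆ cloneGen F :=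
  fun _ hf => Set.mem_sInter.2 fun _ hC => hC.2 hf

theorem isClone_cloneGen (F : Set (Ops A)) : IsClone (cloneGen F) :=
  ⟨fun n i => Set.mem_sInter.2 fun _ hC => hC.1.1 n i,
    fun n m f g hf hg => Set.mem_sInter.2 fun C hC =>
      hC.1.2 n m f g (Set.mem_sInter.1 hf C hC) fun i => Set.mem_sInter.1 (hg i) C hC⟩

theorem cloneGen_subset {F C : Set (Ops A)} (hC : IsClone C) (hFC : F ⊆ C) :
    cloneGen F ⊆ C :=
  Set.sInter_subset_of_mem ⟨hC, hFC⟩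

namespace IsClone

variable {D : Set (Ops A)} (hD : IsClone D)
include hD

theorem comp_update {N m : ℕ} {f : (Fin (N + 1) → A) → A} (hf : (⟨N, f⟩ : Ops A) ∈ D)
    (i : Fin (N + 1)) {p : (Fin (m + 1) → A) → A} {q : (Fin (m + 1) → A) → Fin (N + 1) → A}
    (hp : (⟨m, p⟩ : Ops A) ∈ D) (hq : ∀ l, (⟨m, fun x => q x l⟩ : Ops A) ∈ D) :
    (⟨m, fun x => f (update (q x) i (p x))⟩ : Ops A) ∈ D :=
  hD.2 N m f (fun l x => update (q x) i (p x) l) hf fun l => by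
    rcases eq_or_ne l i with rfl | hl
    · simpa using hp
    · simpa [update_of_ne hl] using hq l

theorem mem_of_factorsThrough
    (hu : ∀ u : A → A, (⟨0, fun x : Fin 1 → A => u (x 0)⟩ : Ops A) ∈ D)
    {m : ℕ} {F h : (Fin (m + 1) → A) → A} (hF : (⟨m, F⟩ : Ops A) ∈ D)
    (hh : h.FactorsThrough F) : (⟨m, h⟩ : Ops A) ∈ D := by
  simpa only [hh.extend_apply] using hD.2 0 m _ (fun _ => F) (hu (extend F h id)) fun _ => hF

end IsClone

end Clone

section Essential

variable {A : Type u} {n : ℕ}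

def IsEssential (f : (Fin n → A) → A) : Prop :=
  ∃ i j, i ≠ j ∧ DependsOnVar f i ∧ DependsOnVar f j

theorem DependsOnVar.exists_update_ne {f : (Fin n → A) → A} {i : Fin n}
    (hi : DependsOnVar f i) : ∃ s s' t, f (update t i s) ≠ f (update t i s') := by
  obtain ⟨x, y, hxy, hne⟩ := hi
  refine ⟨x i, y i, x, ?_⟩
  rwa [update_eq_self, update_eq_iff.2 ⟨rfl, hxy⟩]

theorem DependsOnVar.exists_update_ne_of_ne {f : (Fin n → A) → A} {i j : Fin n} (hij : i ≠ j)
    (hj : DependsOnVar f j) : ∃ s t t', f (update t i s) ≠ f (update t' i s) := by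
  obtain ⟨x, y, hxy, hne⟩ := hj
  refine ⟨x i, x, y, ?_⟩
  rwa [update_eq_self, hxy i hij, update_eq_self]

theorem DependsOnVar.of_comp {u : A → A} {w : (Fin n → A) → A} {j : Fin n}
    (h : DependsOnVar (fun x => u (w x)) j) : DependsOnVar w j :=
  let ⟨x, y, hxy, hne⟩ := h
  ⟨x, y, hxy, fun e => hne (congrArg u e)⟩

theorem IsEssential.of_comp {u : A → A} {w : (Fin n → A) → A}
    (h : IsEssential fun x => u (w x)) : IsEssential w :=
  let ⟨i, j, hij, hi, hj⟩ := h
  ⟨i, j, hij, hi.of_comp, hj.of_comp⟩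

theorem eq_of_dependsOnVar_eval {i j : Fin n} (h : DependsOnVar (fun x : Fin n → A => x i) j) :
    j = i := by
  obtain ⟨x, y, hxy, hne⟩ := h
  by_contra hji
  exact hne (hxy i (Ne.symm hji))

theorem not_isEssential_eval (i : Fin n) : ¬IsEssential fun x : Fin n → A => x i :=
  fun ⟨_, _, hjk, hj, hk⟩ =>
    hjk ((eq_of_dependsOnVar_eval hj).trans (eq_of_dependsOnVar_eval hk).symm)

theorem apply_eq_of_not_dependsOnVar {f : (Fin n → A) → A} {i : Fin n}
    (hf : ∀ j ≠ i, ¬DependsOnVar f j) {x y : Fin n → A} (hxy : x i = y i) : f x = f y := by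
  classical
  have key : ∀ s : Finset (Fin n), i ∉ s → f (s.piecewise y x) = f x := by
    intro s
    induction s using Finset.induction_on with
    | empty => simp
    | insert j s hj ih =>
      intro hi
      rw [piecewise_insert, ← ih (by simp_all)]
      by_contra hne
      exact hf j (by rintro rfl; simp at hi) ⟨_, _, fun l hl => update_of_ne hl _ _, hne⟩
  have hy : (univ.erase i).piecewise y x = y := by
    ext l
    rcases eq_or_ne l i with rfl | hl
    · simp [hxy]
    · simp [hl]
  rw [← hy, key _ (notMem_erase i univ)]

theorem exists_eq_comp_eval_of_not_isEssential {f : (Fin (n + 1) → A) → A}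
    (hf : ¬IsEssential f) : ∃ (i : Fin (n + 1)) (u : A → A), ∀ x, f x = u (x i) := by
  obtain ⟨i, hi⟩ : ∃ i, ∀ j ≠ i, ¬DependsOnVar f j := by
    by_cases h : ∃ i, DependsOnVar f i
    · obtain ⟨i, hi⟩ := h
      exact ⟨i, fun j hji hj => hf ⟨i, j, hji.symm, hi, hj⟩⟩
    · exact ⟨0, fun j _ hj => h ⟨j, hj⟩⟩
  exact ⟨i, fun a => f fun _ => a, fun x => apply_eq_of_not_dependsOnVar hi rfl⟩

theorem exists_surjective_isEssential [Nontrivial A] :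
    ∃ f : (Fin 2 → A) → A, Surjective f ∧ IsEssential f := by
  classical
  obtain ⟨a, b, hab⟩ := exists_pair_ne A
  refine ⟨fun x => if x 1 = a then b else x 0, fun c => ⟨![c, b], by simp [hab.symm]⟩,
    0, 1, by decide, ⟨![a, b], ![b, b], ?_, by simp [hab.symm, hab]⟩,
    ⟨![a, a], ![a, b], ?_, by simp [hab.symm]⟩⟩ <;>
  · intro j hj
    fin_cases j <;> simp_all

end Essential

def slupeckiClone (A : Type u) : Set (Ops A) :=
  {f | ¬(Surjective f.2 ∧ IsEssential f.2)}

theorem isClone_slupeckiClone {A : Type u} [Finite A] : IsClone (slupeckiClone A) := by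
  refine ⟨fun n i h => not_isEssential_eval i h.2, ?_⟩
  rintro n m f g hf hg ⟨hsurj, hess⟩
  have hf_surj : Surjective f := fun a =>
    let ⟨x, hx⟩ := hsurj a
    ⟨_, hx⟩
  obtain ⟨i, u, hu⟩ := exists_eq_comp_eval_of_not_isEssential (f := f) fun h => hf ⟨hf_surj, h⟩
  simp only [hu] at hsurj hess
  have hu_inj : Injective u := Finite.injective_iff_surjective.2 hsurj.of_comp
  exact hg i ⟨hsurj.of_comp_left hu_inj, hess.of_comp⟩

section Rectangle

variable {A X Y : Type*}

theorem Finset.exists_mem_ne_ne {S : Finset A} (hS : 2 < #S) (a b : A) :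
    ∃ c ∈ S, c ≠ a ∧ c ≠ b := by
  classical
  obtain ⟨c, hc⟩ : ((S.erase a).erase b).Nonempty := by
    rw [← card_pos]
    have := pred_card_le_card_erase (s := S) (a := a)
    have := pred_card_le_card_erase (s := S.erase a) (a := b)
    omega
  simp only [mem_erase] at hc
  exact ⟨c, hc.2.2, hc.2.1, hc.1⟩

variable {g : X → Y → A}

theorem exists_two_lt_card_rectangle [DecidableEq A]
    (hX : ∃ x x' y, g x y ≠ g x' y) (hY : ∃ x y y', g x y ≠ g x y')
    (h3 : ∀ a b, ∃ x y, g x y ≠ a ∧ g x y ≠ b) :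
    ∃ x x' y y', 2 < #{g x y, g x y', g x' y, g x' y'} := by
  by_contra! H
  have hcol : ∀ x x' y y', g x y ≠ g x' y → g x y' = g x y ∨ g x y' = g x' y := by
    intro x x' y y' hne
    by_contra! hy'
    exact (H x x' y y').not_gt <| two_lt_card_iff.2
      ⟨g x y, g x' y, g x y', by simp, by simp, by simp, hne, hy'.1.symm, hy'.2.symm⟩
  have hrow : ∀ x x' y y', g x y ≠ g x y' → g x' y = g x y ∨ g x' y = g x y' := by
    intro x x' y y' hne
    by_contra! hx'
    exact (H x x' y y').not_gt <| two_lt_card_iff.2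
      ⟨g x y, g x y', g x' y, by simp, by simp, by simp, hne, hx'.1.symm, hx'.2.symm⟩
  have hconst : ∀ x x' x'' y y'', g x y ≠ g x' y → g x'' y'' ≠ g x y → g x'' y'' ≠ g x' y →
      ∀ y', g x y' = g x y := by
    intro x x' x'' y y'' hne hc hc' y'
    have h1 := hcol x x' y y' hne
    have h2 := hcol x x' y y'' hne
    have h3 : g x y'' = g x y := by
      refine h2.resolve_right fun h => ?_
      have := hcol x x'' y'' y (by rw [h]; exact hc'.symm)
      grind
    have := hcol x x'' y'' y' (by rw [h3]; exact hc.symm)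
    grind
  obtain ⟨x₁, x₂, y₀, hab⟩ := hX
  obtain ⟨x₃, y₃, hca, hcb⟩ := h3 (g x₁ y₀) (g x₂ y₀)
  have r₁ := hconst x₁ x₂ x₃ y₀ y₃ hab hca hcb
  have r₂ := hconst x₂ x₁ x₃ y₀ y₃ hab.symm hcb hca
  have r₃ := hconst x₃ x₁ x₂ y₃ y₀ (by rw [r₁]; exact hca) hcb.symm (by rw [r₁]; exact hab.symm)
  obtain ⟨x₀, y₁, y₂, hy⟩ := hY
  -- rows `x₁, x₂, x₃` are constant with three distinct values, yet each meets row `x₀`,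
  -- which is not constant, in one of its two values on columns `y₁, y₂`
  have := hrow x₀ x₁ y₁ y₂ hy
  have := hrow x₀ x₂ y₁ y₂ hy
  have := hrow x₀ x₃ y₁ y₂ hy
  grind

theorem exists_lone_corner [DecidableEq A] {x x' : X} {y y' : Y}
    (h : 2 < #{g x y, g x y', g x' y, g x' y'}) :
    ∃ x₁ x₂ y₁ y₂, g x₁ y₁ ≠ g x₂ y₂ ∧ g x₁ y₂ ≠ g x₂ y₂ ∧ g x₂ y₁ ≠ g x₂ y₂ := by
  by_contra! H
  have hs := H x x' y y'
  have hp := H x' x y' y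
  have hq := H x' x y y'
  have hr := H x x' y' y
  -- every corner value recurs at another corner, so at most two values occur
  obtain ⟨a, b, c, ha, hb, hc, hab, hac, hbc⟩ := two_lt_card_iff.1 h
  simp only [mem_insert, mem_singleton] at ha hb hc
  grind

theorem exists_rectangle_le_card_image [DecidableEq A] [DecidableEq X] [DecidableEq Y]
    (hX : ∃ x x' y, g x y ≠ g x' y) (hY : ∃ x y y', g x y ≠ g x y')
    {S : Finset A} (hS : ∀ a ∈ S, ∃ x y, g x y = a) {k : ℕ} (hk : 3 ≤ k) (hkS : k ≤ #S) :
    ∃ (P : Finset X) (Q : Finset Y), #P < k ∧ #Q < k ∧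
      k ≤ #((P ×ˢ Q).image fun z => g z.1 z.2) := by
  induction k, hk using Nat.le_induction with
  | base =>
    obtain ⟨x, x', y, y', h⟩ := exists_two_lt_card_rectangle hX hY fun a b => by
      obtain ⟨c, hc, hca, hcb⟩ := S.exists_mem_ne_ne hkS a b
      obtain ⟨x, y, rfl⟩ := hS c hc
      exact ⟨x, y, hca, hcb⟩
    refine ⟨{x, x'}, {y, y'}, card_le_two.trans_lt (by norm_num),
      card_le_two.trans_lt (by norm_num), h.trans_le (card_le_card ?_)⟩
    intro a ha
    simp only [mem_insert, mem_singleton] at ha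
    rcases ha with rfl | rfl | rfl | rfl <;> exact mem_image.2 ⟨(_, _), by simp, rfl⟩
  | succ k hk ih =>
    obtain ⟨P, Q, hP, hQ, hPQ⟩ := ih (by omega)
    set V := (P ×ˢ Q).image fun z => g z.1 z.2
    by_cases hbig : k + 1 ≤ #V
    · exact ⟨P, Q, by omega, by omega, hbig⟩
    obtain ⟨a, haS, haV⟩ := exists_mem_notMem_of_card_lt_card (s := V) (t := S) (by omega)
    obtain ⟨x, y, rfl⟩ := hS a haS
    refine ⟨insert x P, insert y Q, (card_insert_le _ _).trans_lt (by omega),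
      (card_insert_le _ _).trans_lt (by omega), ?_⟩
    calc k + 1 ≤ #(insert (g x y) V) := by rw [card_insert_of_notMem haV]; omega
      _ ≤ _ := card_le_card <| insert_subset (mem_image.2 ⟨(x, y), by simp, rfl⟩)
          (image_subset_image (product_subset_product (subset_insert _ _) (subset_insert _ _)))

end Rectangle

section CharFun

variable {α β : Type*}

open Classical in
noncomputable def charFun (b₀ b₁ : β) (P : α → Prop) (x : α) : β :=
  if P x then b₁ else b₀

variable {b₀ b₁ : β} {P : α → Prop} {x y : α}

@[simp] theorem charFun_of_pos (h : P x) : charFun b₀ b₁ P x = b₁ := if_pos h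

@[simp] theorem charFun_of_neg (h : ¬P x) : charFun b₀ b₁ P x = b₀ := if_neg h

theorem charFun_congr {Q : α → Prop} (h : P x ↔ Q y) :
    charFun b₀ b₁ P x = charFun b₀ b₁ Q y := by
  by_cases hx : P x
  · rw [charFun_of_pos hx, charFun_of_pos (h.1 hx)]
  · rw [charFun_of_neg hx, charFun_of_neg (mt h.2 hx)]

theorem iff_of_charFun_eq (h01 : b₀ ≠ b₁) (h : charFun b₀ b₁ P x = charFun b₀ b₁ P y) :
    P x ↔ P y := by
  by_cases hx : P x <;> by_cases hy : P y <;> simp_all [eq_comm]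

end CharFun

section Boolean

variable {A : Type u} {D : Set (Ops A)} (hD : IsClone D)
  (hu : ∀ u : A → A, (⟨0, fun x : Fin 1 → A => u (x 0)⟩ : Ops A) ∈ D)
  {a₀ a₁ : A} (h01 : a₀ ≠ a₁) {m : ℕ}

include hD hu h01

theorem charFun_not_mem {P : (Fin (m + 1) → A) → Prop}
    (hP : (⟨m, charFun a₀ a₁ P⟩ : Ops A) ∈ D) :
    (⟨m, charFun a₀ a₁ fun x => ¬P x⟩ : Ops A) ∈ D :=
  hD.mem_of_factorsThrough hu hP fun _ _ hxy =>
    charFun_congr (not_congr (iff_of_charFun_eq h01 hxy))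

theorem charFun_and_mem {N : ℕ} {f : (Fin (N + 1) → A) → A} (hf : (⟨N, f⟩ : Ops A) ∈ D)
    (i : Fin (N + 1)) {s₁ s₂ : A} {t₁ t₂ : Fin (N + 1) → A}
    (h₁₁ : f (update t₁ i s₁) ≠ f (update t₂ i s₂))
    (h₁₂ : f (update t₂ i s₁) ≠ f (update t₂ i s₂))
    (h₂₁ : f (update t₁ i s₂) ≠ f (update t₂ i s₂)) {P Q : (Fin (m + 1) → A) → Prop}
    (hP : (⟨m, charFun a₀ a₁ P⟩ : Ops A) ∈ D) (hQ : (⟨m, charFun a₀ a₁ Q⟩ : Ops A) ∈ D) :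
    (⟨m, charFun a₀ a₁ fun x => P x ∧ Q x⟩ : Ops A) ∈ D := by
  have hp : (⟨m, charFun s₁ s₂ P⟩ : Ops A) ∈ D :=
    hD.mem_of_factorsThrough hu hP fun _ _ hxy => charFun_congr (iff_of_charFun_eq h01 hxy)
  have hq : ∀ l, (⟨m, charFun (t₁ l) (t₂ l) Q⟩ : Ops A) ∈ D := fun l =>
    hD.mem_of_factorsThrough hu hQ fun _ _ hxy => charFun_congr (iff_of_charFun_eq h01 hxy)
  have he : ∀ x, f (update (fun l => charFun (t₁ l) (t₂ l) Q x) i (charFun s₁ s₂ P x)) =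
      f (update t₂ i s₂) ↔ P x ∧ Q x := by
    intro x
    by_cases hPx : P x <;> by_cases hQx : Q x <;> simp [*]
  exact hD.mem_of_factorsThrough hu (hD.comp_update hf i hp hq) fun x y hxy =>
    charFun_congr (by rw [← he, ← he, hxy])

variable (hand : ∀ P Q : (Fin (m + 1) → A) → Prop, (⟨m, charFun a₀ a₁ P⟩ : Ops A) ∈ D →
  (⟨m, charFun a₀ a₁ Q⟩ : Ops A) ∈ D → (⟨m, charFun a₀ a₁ fun x => P x ∧ Q x⟩ : Ops A) ∈ D)
include hand

omit h01 in
theorem charFun_forall_mem {ι : Type*} [Finite ι] {P : ι → (Fin (m + 1) → A) → Prop}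
    (hP : ∀ k, (⟨m, charFun a₀ a₁ (P k)⟩ : Ops A) ∈ D) :
    (⟨m, charFun a₀ a₁ fun x => ∀ k, P k x⟩ : Ops A) ∈ D := by
  classical
  cases nonempty_fintype ι
  suffices ∀ s : Finset ι, (⟨m, charFun a₀ a₁ fun x => ∀ k ∈ s, P k x⟩ : Ops A) ∈ D by
    simpa using this univ
  intro s
  induction s using Finset.induction_on with
  | empty => exact hD.mem_of_factorsThrough hu (hD.1 m 0) fun _ _ _ => charFun_congr (by simp)
  | insert k s _ ih => simpa only [forall_mem_insert] using hand _ _ (hP k) ih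

theorem charFun_mem [Finite A] (P : (Fin (m + 1) → A) → Prop) :
    (⟨m, charFun a₀ a₁ P⟩ : Ops A) ∈ D := by
  classical
  have hcoord : ∀ l b, (⟨m, charFun a₀ a₁ fun x => x l = b⟩ : Ops A) ∈ D := fun l b =>
    hD.mem_of_factorsThrough hu (hD.1 m l) fun _ _ hxy => charFun_congr (by rw [hxy])
  have hne : ∀ a, (⟨m, charFun a₀ a₁ fun x => ¬x = a⟩ : Ops A) ∈ D := fun a => by
    simpa only [funext_iff] using
      charFun_not_mem hD hu h01 (charFun_forall_mem hD hu hand fun l => hcoord l (a l))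
  simpa using charFun_not_mem hD hu h01
    (charFun_forall_mem hD hu hand (ι := {a // P a}) fun a => hne a)

end Boolean

theorem exists_factorsThrough_comp {Z α β γ : Type*} [Fintype Z] [DecidableEq β]
    [DecidableEq γ] (h : Z → γ) (f : α → β) (T : Finset α) (hT : #(univ.image h) ≤ #(T.image f)) :
    ∃ c : Z → α, (∀ z, c z ∈ T) ∧ h.FactorsThrough (f ∘ c) := by
  obtain ⟨e⟩ := Function.Embedding.nonempty_of_card_le (α := univ.image h) (β := T.image f)
    (by simpa using hT)
  choose s hsT hsf using fun b : T.image f => mem_image.1 b.2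
  refine ⟨fun z => s (e ⟨h z, mem_image_of_mem h (mem_univ z)⟩), fun z => hsT _,
    fun z z' hzz' => ?_⟩
  simp only [comp_apply, hsf] at hzz'
  exact congrArg Subtype.val (e.injective (Subtype.ext hzz'))

section Generation

variable {A : Type u} [Fintype A] [DecidableEq A] {D : Set (Ops A)} (hD : IsClone D)
  (hu : ∀ u : A → A, (⟨0, fun x : Fin 1 → A => u (x 0)⟩ : Ops A) ∈ D)
include hD hu

theorem mem_of_card_image_le_two {a₀ a₁ : A} (h01 : a₀ ≠ a₁) {m : ℕ}
    (hchar : ∀ P : (Fin (m + 1) → A) → Prop, (⟨m, charFun a₀ a₁ P⟩ : Ops A) ∈ D)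
    {h : (Fin (m + 1) → A) → A} (hh : #(univ.image h) ≤ 2) : (⟨m, h⟩ : Ops A) ∈ D := by
  set x₀ : Fin (m + 1) → A := fun _ => a₀
  refine hD.mem_of_factorsThrough hu (hchar fun x => h x = h x₀) fun x y hxy => ?_
  have hiff := iff_of_charFun_eq h01 hxy
  by_cases hx : h x = h x₀
  · exact hx.trans (hiff.1 hx).symm
  by_contra hne
  exact hh.not_gt <| two_lt_card_iff.2 ⟨h x, h y, h x₀, mem_image_of_mem h (mem_univ x),
    mem_image_of_mem h (mem_univ y), mem_image_of_mem h (mem_univ x₀), hne, hx, mt hiff.2 hx⟩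

theorem mem_of_card_image_le_card_image_rectangle {N : ℕ} {f : (Fin (N + 1) → A) → A}
    (hf : (⟨N, f⟩ : Ops A) ∈ D) (i : Fin (N + 1)) {k : ℕ}
    (ih : ∀ m (h : (Fin (m + 1) → A) → A), #(univ.image h) ≤ k → (⟨m, h⟩ : Ops A) ∈ D)
    {P : Finset A} {Q : Finset (Fin (N + 1) → A)} (hP : #P ≤ k) (hQ : #Q ≤ k)
    {m : ℕ} {h : (Fin (m + 1) → A) → A}
    (hh : #(univ.image h) ≤ #((P ×ˢ Q).image fun z => f (update z.2 i z.1))) :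
    (⟨m, h⟩ : Ops A) ∈ D := by
  obtain ⟨c, hc, hhc⟩ := exists_factorsThrough_comp h _ _ hh
  refine hD.mem_of_factorsThrough hu (hD.comp_update hf i (ih _ _ ?_) fun l => ih _ _ ?_) hhc
  · exact (card_le_card (image_subset_iff.2 fun x _ => (mem_product.1 (hc x)).1)).trans hP
  · exact (card_le_card (image_subset_iff.2 fun x _ =>
      mem_image_of_mem (· l) (mem_product.1 (hc x)).2)).trans (card_image_le.trans hQ)

theorem mem_of_forall_card_image_le_two {N : ℕ} {f : (Fin (N + 1) → A) → A}
    (hf : (⟨N, f⟩ : Ops A) ∈ D) (hsurj : Surjective f) (i : Fin (N + 1))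
    (hX : ∃ s s' t, f (update t i s) ≠ f (update t i s'))
    (hY : ∃ s t t', f (update t i s) ≠ f (update t' i s))
    (h2 : ∀ m (h : (Fin (m + 1) → A) → A), #(univ.image h) ≤ 2 → (⟨m, h⟩ : Ops A) ∈ D)
    (m : ℕ) (h : (Fin (m + 1) → A) → A) : (⟨m, h⟩ : Ops A) ∈ D := by
  suffices ∀ k ≥ 2, ∀ m (h : (Fin (m + 1) → A) → A),
      #(univ.image h) ≤ k → (⟨m, h⟩ : Ops A) ∈ D from
    this (Fintype.card A + 2) (by omega) m h ((card_le_univ _).trans (by omega))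
  intro k hk
  induction k, hk using Nat.le_induction with
  | base => exact h2
  | succ k hk ih =>
    intro m h hh
    rcases hh.lt_or_eq with hlt | heq
    · exact ih m h (by omega)
    obtain ⟨P, Q, hP, hQ, hPQ⟩ := exists_rectangle_le_card_image
      (g := fun s t => f (update t i s)) hX hY (S := univ)
      (fun a _ => let ⟨z, hz⟩ := hsurj a; ⟨z i, z, by simpa using hz⟩) (k := k + 1) (by omega)
      (by simpa [← heq] using card_le_univ (univ.image h))
    exact mem_of_card_image_le_card_image_rectangle hD hu hf i ih (by omega) (by omega)
      (heq.trans_le hPQ)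

end Generation

theorem IsClone.eq_univ_of_surjective_of_dependsOnVar {A : Type u} [Fintype A]
    (hA : 2 < Fintype.card A) {D : Set (Ops A)} (hD : IsClone D)
    (hu : ∀ u : A → A, (⟨0, fun x : Fin 1 → A => u (x 0)⟩ : Ops A) ∈ D)
    {N : ℕ} {f : (Fin (N + 1) → A) → A} (hf : (⟨N, f⟩ : Ops A) ∈ D) (hsurj : Surjective f)
    {i j : Fin (N + 1)} (hij : i ≠ j) (hi : DependsOnVar f i) (hj : DependsOnVar f j) :
    D = Set.univ := by
  classical
  have hX := hi.exists_update_ne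
  have hY := hj.exists_update_ne_of_ne hij
  obtain ⟨s, s', t, t', h3⟩ := exists_two_lt_card_rectangle (g := fun s t => f (update t i s))
    hX hY fun a b => by
      obtain ⟨c, -, hca, hcb⟩ := (univ : Finset A).exists_mem_ne_ne (by simpa using hA) a b
      obtain ⟨z, rfl⟩ := hsurj c
      exact ⟨z i, z, by simpa using hca, by simpa using hcb⟩
  obtain ⟨s₁, s₂, t₁, t₂, h₁₁, h₁₂, h₂₁⟩ :=
    exists_lone_corner (g := fun s t => f (update t i s)) h3
  obtain ⟨a₀, a₁, h01⟩ := Fintype.exists_pair_of_one_lt_card (by omega : 1 < Fintype.card A)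
  have hchar m := charFun_mem (m := m) hD hu h01 fun _ _ =>
    charFun_and_mem hD hu h01 hf i h₁₁ h₁₂ h₂₁
  exact Set.eq_univ_of_forall fun ⟨m, h⟩ => mem_of_forall_card_image_le_two hD hu hf hsurj i
    hX hY (fun _ _ => mem_of_card_image_le_two hD hu h01 (hchar _)) m h

/-- **Słupecki's Theorem.**  Let `A` be a finite set with `|A| > 2` and let `F` be a set
of operations on `A` containing every unary operation.  Then `F` is complete if and
only if `F` contains an operation that is both surjective and essential (depends on at
least two of its variables). -/
theorem slupecki {A : Type u} [Fintype A] (hA : 2 < Fintype.card A)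
    (F : Set (Ops A)) (hF : ∀ u : A → A, (⟨0, fun x : Fin 1 → A => u (x 0)⟩ : Ops A) ∈ F) :
    cloneGen F = Set.univ ↔
      ∃ f ∈ F, Function.Surjective f.2 ∧
        ∃ i j : Fin (f.1 + 1), i ≠ j ∧ DependsOnVar f.2 i ∧ DependsOnVar f.2 j := by
  constructor
  · intro hcomplete
    by_contra hF_slupecki
    have : Nontrivial A := Fintype.one_lt_card_iff_nontrivial.1 (by omega)
    obtain ⟨f, hf_surj, hf_ess⟩ := exists_surjective_isEssential (A := A)
    have hsub : cloneGen F ⊆ slupeckiClone A :=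
      cloneGen_subset isClone_slupeckiClone fun f hfF hf => hF_slupecki ⟨f, hfF, hf⟩
    exact hsub (hcomplete ▸ Set.mem_univ (⟨1, f⟩ : Ops A)) ⟨hf_surj, hf_ess⟩
  · rintro ⟨⟨N, f⟩, hfF, hf_surj, i, j, hij, hi, hj⟩
    exact (isClone_cloneGen F).eq_univ_of_surjective_of_dependsOnVar hA
      (fun u => subset_cloneGen F (hF u)) (subset_cloneGen F hfF) hf_surj hij hi hj
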